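/- Let a, b, c, p, q, r be positive integers. Assume that c has no divisors of the form s^min(p,q) for any prime s, that b has no divisors of the form s^min(p,r) for any prime s, and that a has no divisors of the form s^min(q,r) for any prime s. Then an integer solution (x,y,z) of the equation a*x^p + b*y^q = c*z^r satisfies gcd(x,y,z) = 1 if and only if x, y, z are pairwise coprime. -/

import Mathlib

/-!
If a prime `s` divided two of `x, y, z` but not the third, say `x` and `y` but not `z`, then
`s ^ min p q` would divide `a x^p + b y^q = c z^r`; as `s` is prime and `s ∤ z^r`, it would
divide `c`, which is excluded. Hence when `gcd(x, y, z) = 1` no prime divides two of them.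
-/

theorem Prime.pow_min_dvd_of_mul_pow_add_mul_pow_eq {R : Type*} [CommSemiring R] [IsDomain R]
    {s a b c x y z : R} {p q r : ℕ} (hs : Prime s) (hx : s ∣ x) (hy : s ∣ y) (hz : ¬ s ∣ z)
    (h : a * x ^ p + b * y ^ q = c * z ^ r) : s ^ min p q ∣ c := by
  have hxp : s ^ min p q ∣ a * x ^ p :=
    ((pow_dvd_pow s (min_le_left p q)).trans (pow_dvd_pow_of_dvd hx p)).mul_left a
  have hyq : s ^ min p q ∣ b * y ^ q :=
    ((pow_dvd_pow s (min_le_right p q)).trans (pow_dvd_pow_of_dvd hy q)).mul_left b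
  exact hs.pow_dvd_of_dvd_mul_right _ (fun hzr => hz (hs.dvd_of_dvd_pow hzr)) (h ▸ dvd_add hxp hyq)

theorem Int.isCoprime_of_mul_pow_add_mul_pow_eq {a b x y z : ℤ} {c p q r : ℕ}
    (hc : ∀ s : ℕ, s.Prime → ¬ s ^ min p q ∣ c)
    (hxyz : ∀ s : ℕ, s.Prime → (s : ℤ) ∣ x → (s : ℤ) ∣ y → ¬ (s : ℤ) ∣ z)
    (h : a * x ^ p + b * y ^ q = c * z ^ r) : IsCoprime x y := by
  rw [Int.isCoprime_iff_nat_coprime]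
  refine Nat.coprime_of_dvd fun s hs hsx hsy => hc s hs ?_
  have hsx' : (s : ℤ) ∣ x := Int.natCast_dvd.mpr hsx
  have hsy' : (s : ℤ) ∣ y := Int.natCast_dvd.mpr hsy
  exact_mod_cast (Nat.prime_iff_prime_int.mp hs).pow_min_dvd_of_mul_pow_add_mul_pow_eq
    hsx' hsy' (hxyz s hs hsx' hsy') h

theorem Int.not_dvd_of_gcd_gcd_eq_one {x y z : ℤ} {s : ℕ} (h : Int.gcd (Int.gcd x y) z = 1)
    (hs : s.Prime) (hx : (s : ℤ) ∣ x) (hy : (s : ℤ) ∣ y) : ¬ (s : ℤ) ∣ z := fun hz => by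
  have hs1 := Int.dvd_coe_gcd (Int.dvd_coe_gcd hx hy) hz
  rw [h] at hs1
  exact hs.not_dvd_one (by exact_mod_cast hs1)

theorem stmt0_general (a b c p q r : ℕ)
    (hcdiv : ∀ s : ℕ, s.Prime → ¬ s ^ (min p q) ∣ c)
    (hbdiv : ∀ s : ℕ, s.Prime → ¬ s ^ (min p r) ∣ b)
    (hadiv : ∀ s : ℕ, s.Prime → ¬ s ^ (min q r) ∣ a)
    (x y z : ℤ) (heq : (a : ℤ) * x ^ p + (b : ℤ) * y ^ q = (c : ℤ) * z ^ r) :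
    Int.gcd (Int.gcd x y) z = 1 ↔ (IsCoprime x y ∧ IsCoprime y z ∧ IsCoprime x z) := by
  refine ⟨fun h => ⟨?_, ?_, ?_⟩, fun ⟨hxy, _, _⟩ => ?_⟩
  · exact Int.isCoprime_of_mul_pow_add_mul_pow_eq hcdiv
      (fun _ hs => Int.not_dvd_of_gcd_gcd_eq_one h hs) heq
  · exact Int.isCoprime_of_mul_pow_add_mul_pow_eq (a := -b) (b := c) (r := p) hadiv
      (fun _ hs hy hz hx => Int.not_dvd_of_gcd_gcd_eq_one h hs hx hy hz)
      (by linear_combination -heq)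
  · exact Int.isCoprime_of_mul_pow_add_mul_pow_eq (a := -a) (b := c) (r := q) hbdiv
      (fun _ hs hx hz hy => Int.not_dvd_of_gcd_gcd_eq_one h hs hx hy hz)
      (by linear_combination -heq)
  · rw [Int.isCoprime_iff_gcd_eq_one.mp hxy]
    simp

/-- If `c` has no divisors of the form `s^min(p,q)` for prime `s`, `b` has no divisors of the
form `s^min(p,r)` for prime `s`, and `a` has no divisors of the form `s^min(q,r)` for prime `s`,
then an integer solution `(x,y,z)` of `a*x^p + b*y^q = c*z^r` satisfies `gcd(x,y,z) = 1` if and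
only if `x, y, z` are pairwise coprime. -/
theorem stmt0 (a b c p q r : ℕ) (ha : 0 < a) (hb : 0 < b) (hc : 0 < c)
    (hp : 0 < p) (hq : 0 < q) (hr : 0 < r)
    (hcdiv : ∀ s : ℕ, s.Prime → ¬ s ^ (min p q) ∣ c)
    (hbdiv : ∀ s : ℕ, s.Prime → ¬ s ^ (min p r) ∣ b)
    (hadiv : ∀ s : ℕ, s.Prime → ¬ s ^ (min q r) ∣ a)
    (x y z : ℤ) (heq : (a : ℤ) * x ^ p + (b : ℤ) * y ^ q = (c : ℤ) * z ^ r) :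
    Int.gcd (Int.gcd x y) z = 1 ↔ (IsCoprime x y ∧ IsCoprime y z ∧ IsCoprime x z) :=
  stmt0_general a b c p q r hcdiv hbdiv hadiv x y z heq
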